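/- Let n ≥ 1 and consider the two lexical matchings M^n_{2n+1,n+1} and M^{n+1}_{2n+1,n+1} between levels n+1 and n+2 of Q_{2n+1}. For every vertex x in level n+1 of Q_{2n+1}: x is matched by M^n_{2n+1,n+1} and unmatched by M^{n+1}_{2n+1,n+1} if and only if x ∈ D^{=0}_{2n+1,n+1}; x is matched by M^{n+1}_{2n+1,n+1} and unmatched by M^n_{2n+1,n+1} if and only if x ∈ D^-_{2n+1,n+1}; and x is unmatched by both matchings if and only if x ∈ D^{>0}_{2n+1,n+1}. -/

import Mathlib

/-- The Hamming weight of a bitstring of length `n`, i.e., its number of 1-bits. -/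
def wt {n : ℕ} (x : Fin n → Bool) : ℕ := (Finset.univ.filter fun i => x i = true).card

/-- The `n`-dimensional hypercube: vertices are bitstrings of length `n`, two of which are
adjacent iff they differ in exactly one position. -/
def cube (n : ℕ) : SimpleGraph (Fin n → Bool) where
  Adj x y := hammingDist x y = 1
  symm := by constructor; intro x y h; simpa [hammingDist_comm] using h
  loopless := by constructor; intro x h; simp [hammingDist_self] at h
/-- The number of 1-bits among the first `j` bits of `x` (interpreting a bitstring as a
lattice path, this determines the height after `j` steps). -/
def onesUpTo {n : ℕ} (x : Fin n → Bool) (j : ℕ) : ℕ :=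
  (Finset.univ.filter fun i : Fin n => i.val < j ∧ x i = true).card

/-- The height of the lattice path of `x` after `j` steps: number of 1s minus number of 0s
among the first `j` bits (appended steps beyond the length of `x` being down-steps). -/
def hgt {n : ℕ} (x : Fin n → Bool) (j : ℕ) : ℤ := 2 * (onesUpTo x j : ℤ) - (j : ℤ)

/-- The length of the extended lattice path `x^↑`: if the final height `2·wt x − n` is `≥ −1`,
down-steps are appended until the path ends at height `−1` (total length `2·wt x + 1`);
otherwise nothing is appended. -/
def extLen {n : ℕ} (x : Fin n → Bool) : ℕ := max n (2 * wt x + 1)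

/-- Position `j` (0-indexed) of the extended path `x^↑` is a down-step: either it is a 0-bit
of `x`, or one of the appended down-steps. -/
def isDownStep {n : ℕ} (x : Fin n → Bool) (j : ℕ) : Prop :=
  j < extLen x ∧ ∀ h : j < n, x ⟨j, h⟩ = false

/-- The `i`-lexical matching `M^i_{n,k}` between levels `k` and `k+1` of the `n`-cube, as a
relation: `lexUp n k i x y` holds iff `x` lies in level `k` and `y = M^{i,↑}_{n,k}(x)`, i.e.,
`y` is obtained from `x` by flipping to 1 the 0-bit at the `i`-th down-step of `x^↑` in the
order of decreasing starting height, ties broken from right to left, counting from 0,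
provided this down-step lies within `x`. -/
def lexUp (n k i : ℕ) (x y : Fin n → Bool) : Prop :=
  wt x = k ∧ ∃ d : ℕ, d < n ∧ isDownStep x d ∧
    ({j : ℕ | isDownStep x j ∧ (hgt x d < hgt x j ∨ (hgt x j = hgt x d ∧ d < j))}).ncard = i ∧
    y = fun t : Fin n => if t.val = d then true else x t
/-- `x ∈ D_{m,k}`: a bitstring of length `m` with exactly `k` 1-bits such that every prefix
contains at least as many 1s as 0s. -/
def inD (m k : ℕ) (x : Fin m → Bool) : Prop :=
  wt x = k ∧ ∀ j ≤ m, j ≤ 2 * onesUpTo x j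

/-- `x ∈ D^{>0}_{m,k}`: moreover every nonempty prefix contains strictly more 1s than 0s. -/
def inDgt0 (m k : ℕ) (x : Fin m → Bool) : Prop :=
  wt x = k ∧ ∀ j, 1 ≤ j → j ≤ m → j < 2 * onesUpTo x j

/-- `x ∈ D^{=0}_{m,k}`: in `D_{m,k}` with at least one nonempty prefix containing equally
many 1s and 0s. -/
def inDeq0 (m k : ℕ) (x : Fin m → Bool) : Prop :=
  inD m k x ∧ ∃ j, 1 ≤ j ∧ j ≤ m ∧ j = 2 * onesUpTo x j

/-- `x ∈ D^-_{m,k}`: a bitstring of length `m` with exactly `k` 1-bits such that exactly one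
prefix contains strictly fewer 1s than 0s. -/
def inDminus (m k : ℕ) (x : Fin m → Bool) : Prop :=
  wt x = k ∧ ({j : ℕ | j ≤ m ∧ 2 * onesUpTo x j < j}).ncard = 1

/-!
The extended path `x^↑` has `n + 2` down-steps: the `n` zeros of `x` and two appended ones,
starting at heights `1` and `0`. Being matched by `M^{n+1}` (resp. `M^n`) means that the last
(resp. second-to-last) down-step in the lexical order lies within `x`. As ties are broken from
right to left, the appended down-step at height `0` comes after all down-steps of `x` starting at
positive height and before all others. So the last down-step lies within `x` iff `x` has a
down-step starting at height `≤ 0`, i.e. iff the path of `x` goes negative; the second-to-last one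
does iff `x` has two such down-steps (the path goes negative at least twice), or none but one
starting at height `1` (the path stays nonnegative and returns to `0`).
-/

namespace LexicalMatching

open Function

section Path

variable {m : ℕ} (x : Fin m → Bool)

lemma hgt_zero : hgt x 0 = 0 := by
  simp [hgt, onesUpTo]

lemma onesUpTo_of_le {j : ℕ} (hj : m ≤ j) : onesUpTo x j = wt x := by
  unfold onesUpTo wt
  congr 1
  exact Finset.filter_congr fun i _ => by simp [i.isLt.trans_le hj]

lemma hgt_of_le {j : ℕ} (hj : m ≤ j) : hgt x j = 2 * wt x - j := by
  rw [hgt, onesUpTo_of_le x hj]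

lemma onesUpTo_succ {j : ℕ} (hj : j < m) :
    onesUpTo x (j + 1) = onesUpTo x j + if x ⟨j, hj⟩ = true then 1 else 0 := by
  have hsplit : ∀ i : Fin m, (if i.val < j + 1 ∧ x i = true then 1 else 0) =
      (if i.val < j ∧ x i = true then 1 else 0) +
        if (⟨j, hj⟩ : Fin m) = i then (if x i = true then 1 else 0) else 0 := by
    intro i
    simp only [Fin.ext_iff]
    split_ifs <;> simp_all <;> omega
  simp only [onesUpTo, Finset.card_filter, hsplit, Finset.sum_add_distrib, Finset.sum_ite_eq,
    Finset.mem_univ, if_true]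

lemma hgt_succ {j : ℕ} (hj : j < m) :
    hgt x (j + 1) = hgt x j + if x ⟨j, hj⟩ = true then 1 else -1 := by
  rw [hgt, hgt, onesUpTo_succ x hj]
  split_ifs <;> push_cast <;> ring

lemma hgt_succ_of_true {j : ℕ} (hj : j < m) (hxj : x ⟨j, hj⟩ = true) :
    hgt x (j + 1) = hgt x j + 1 := by
  simp [hgt_succ x hj, hxj]

lemma hgt_succ_of_false {j : ℕ} (hj : j < m) (hxj : x ⟨j, hj⟩ = false) :
    hgt x (j + 1) = hgt x j - 1 := by
  simp [hgt_succ x hj, hxj, sub_eq_add_neg]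

lemma exists_down_step_of_hgt_lt {l c : ℕ} {h : ℤ} (hlc : l ≤ c) (hcm : c ≤ m)
    (hl : h ≤ hgt x l) (hc : hgt x c < h) :
    ∃ e, ∃ he : e < m, l ≤ e ∧ e < c ∧ x ⟨e, he⟩ = false ∧ hgt x e = h := by
  induction c, hlc using Nat.le_induction with
  | base => omega
  | succ c hlc ih =>
    by_cases hlow : hgt x c < h
    · obtain ⟨e, he, hle, hec, hxe, hhe⟩ := ih (by omega) hlow
      exact ⟨e, he, hle, by omega, hxe, hhe⟩
    · cases hxc : x ⟨c, by omega⟩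
      · have := hgt_succ_of_false x _ hxc
        exact ⟨c, by omega, hlc, by omega, hxc, by omega⟩
      · have := hgt_succ_of_true x _ hxc
        omega

end Path

section Prefixes

variable {m : ℕ} (x : Fin m → Bool)

def negPrefixes : Set ℕ := {j | j ≤ m ∧ hgt x j < 0}

def lowDownSteps : Set ℕ := {d | ∃ hd : d < m, x ⟨d, hd⟩ = false ∧ hgt x d ≤ 0}

def ReturnsToZero : Prop := ∃ j, 0 < j ∧ j ≤ m ∧ hgt x j = 0

lemma negPrefixes_finite : (negPrefixes x).Finite :=
  (Set.finite_Iic m).subset fun _ hj => hj.1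

lemma lowDownSteps_finite : (lowDownSteps x).Finite :=
  (Set.finite_Iio m).subset fun _ ⟨hd, _⟩ => hd

lemma lowDownSteps_nonempty_iff : (lowDownSteps x).Nonempty ↔ (negPrefixes x).Nonempty := by
  constructor
  · rintro ⟨d, hd, hxd, hhd⟩
    exact ⟨d + 1, hd, by rw [hgt_succ_of_false x hd hxd]; omega⟩
  · rintro ⟨j, hjm, hj⟩
    obtain ⟨e, he, -, -, hxe, hhe⟩ :=
      exists_down_step_of_hgt_lt x (Nat.zero_le j) hjm (hgt_zero x).ge hj
    exact ⟨e, he, hxe, hhe.le⟩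

/-- If the path goes negative twice, either it reaches `-2` (crossing down from `0` and from
`-1`), or it returns to `0` in between (crossing down from `0` twice). -/
lemma one_lt_ncard_lowDownSteps_iff :
    1 < (lowDownSteps x).ncard ↔ 1 < (negPrefixes x).ncard := by
  rw [Set.one_lt_ncard_iff (lowDownSteps_finite x), Set.one_lt_ncard_iff (negPrefixes_finite x)]
  constructor
  · rintro ⟨d, d', ⟨hd, hxd, hhd⟩, ⟨hd', hxd', hhd'⟩, hne⟩
    refine ⟨d + 1, d' + 1, ⟨hd, ?_⟩, ⟨hd', ?_⟩, by omega⟩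
    · rw [hgt_succ_of_false x hd hxd]; omega
    · rw [hgt_succ_of_false x hd' hxd']; omega
  · intro h
    obtain ⟨a, b, ⟨ham, ha⟩, ⟨hbm, hb⟩, hab⟩ : ∃ a b, (a ≤ m ∧ hgt x a < 0) ∧
        (b ≤ m ∧ hgt x b < 0) ∧ a < b := by
      obtain ⟨a, b, ha, hb, hab⟩ := h
      rcases Nat.lt_or_gt_of_ne hab with hab | hab
      · exact ⟨a, b, ha, hb, hab⟩
      · exact ⟨b, a, hb, ha, hab⟩
    obtain ⟨e, he, -, hea, hxe, hhe⟩ :=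
      exists_down_step_of_hgt_lt x (Nat.zero_le a) ham (hgt_zero x).ge ha
    by_cases hdeep : ∃ c ≤ m, hgt x c ≤ -2
    · obtain ⟨c, hcm, hc⟩ := hdeep
      obtain ⟨e', he', -, -, hxe', hhe'⟩ :=
        exists_down_step_of_hgt_lt x (Nat.zero_le c) hcm (by rw [hgt_zero]; omega)
          (show hgt x c < -1 by omega)
      exact ⟨e, e', ⟨he, hxe, hhe.le⟩, ⟨he', hxe', by omega⟩, fun h => by subst h; omega⟩
    · push Not at hdeep
      have hstep := hgt_succ x (j := a) (by omega)
      have hdeep_a := hdeep a ham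
      have hdeep_a1 := hdeep (a + 1) (by omega)
      have hreturn : 0 ≤ hgt x (a + 1) := by split_ifs at hstep <;> omega
      obtain ⟨e', he', hae', -, hxe', hhe'⟩ :=
        exists_down_step_of_hgt_lt x (show a + 1 ≤ b by omega) hbm hreturn hb
      exact ⟨e, e', ⟨he, hxe, hhe.le⟩, ⟨he', hxe', hhe'.le⟩, by omega⟩

lemma exists_down_step_from_one_iff (hneg : negPrefixes x = ∅) :
    (∃ d, ∃ hd : d < m, x ⟨d, hd⟩ = false ∧ hgt x d = 1) ↔ ReturnsToZero x := by
  constructor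
  · rintro ⟨d, hd, hxd, hhd⟩
    exact ⟨d + 1, by omega, hd, by rw [hgt_succ_of_false x hd hxd, hhd]; ring⟩
  · rintro ⟨j', hj', hjm, hj⟩
    obtain ⟨j, rfl⟩ : ∃ j, j' = j + 1 := ⟨j' - 1, by omega⟩
    have hnonneg : 0 ≤ hgt x j := by
      by_contra h
      exact (Set.eq_empty_iff_forall_notMem.mp hneg) j ⟨by omega, by omega⟩
    cases hxj : x ⟨j, hjm⟩
    · have := hgt_succ_of_false x hjm hxj
      exact ⟨j, hjm, hxj, by omega⟩
    · have := hgt_succ_of_true x hjm hxj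
      omega

end Prefixes

section DyckClasses

variable {m k : ℕ} {x : Fin m → Bool}

lemma hgt_neg_iff {j : ℕ} : hgt x j < 0 ↔ 2 * onesUpTo x j < j := by
  rw [hgt]; omega

lemma negPrefixes_eq_empty_iff : negPrefixes x = ∅ ↔ ∀ j ≤ m, j ≤ 2 * onesUpTo x j := by
  simp only [Set.eq_empty_iff_forall_notMem, negPrefixes, Set.mem_ofPred_eq, hgt_neg_iff]
  exact forall_congr' fun j => by omega

lemma returnsToZero_iff : ReturnsToZero x ↔ ∃ j, 1 ≤ j ∧ j ≤ m ∧ j = 2 * onesUpTo x j := by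
  simp only [ReturnsToZero, hgt]
  exact exists_congr fun j => by omega

lemma inDminus_iff : inDminus m k x ↔ wt x = k ∧ (negPrefixes x).ncard = 1 := by
  simp only [inDminus, negPrefixes, hgt_neg_iff]

lemma inDeq0_iff : inDeq0 m k x ↔ wt x = k ∧ negPrefixes x = ∅ ∧ ReturnsToZero x := by
  rw [inDeq0, inD, negPrefixes_eq_empty_iff, returnsToZero_iff, and_assoc]

lemma inDgt0_iff : inDgt0 m k x ↔ wt x = k ∧ negPrefixes x = ∅ ∧ ¬ ReturnsToZero x := by
  rw [inDgt0, negPrefixes_eq_empty_iff, returnsToZero_iff]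
  refine and_congr_right fun _ => ⟨fun h => ⟨fun j hj => ?_, ?_⟩, fun ⟨h, h'⟩ j hj hjm => ?_⟩
  · rcases j with _ | j
    · omega
    · exact (h _ (by omega) hj).le
  · rintro ⟨j, hj, hjm, hj'⟩
    have := h j hj hjm
    omega
  · have := h j hjm
    by_contra
    exact h' ⟨j, hj, hjm, by omega⟩

end DyckClasses

lemma ncard_gt_add_ncard_lt_add_one {α β : Type*} [LinearOrder β] {f : α → β}
    (hf : Injective f) {s : Set α} (hs : s.Finite) {a : α} (ha : a ∈ s) :
    {b ∈ s | f a < f b}.ncard + {b ∈ s | f b < f a}.ncard + 1 = s.ncard := by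
  have hle : s \ {b | f a < f b} = insert a {b ∈ s | f b < f a} := by
    ext b
    simp only [Set.mem_insert_iff, Set.mem_sdiff, Set.mem_ofPred_eq, not_lt]
    constructor
    · rintro ⟨hb, hba⟩
      rcases hba.lt_or_eq with hlt | heq
      · exact Or.inr ⟨hb, hlt⟩
      · exact Or.inl (hf heq)
    · rintro (rfl | ⟨hb, hba⟩)
      · exact ⟨ha, le_rfl⟩
      · exact ⟨hb, hba.le⟩
  rw [← Set.ncard_inter_add_ncard_sdiff_eq_ncard s {b | f a < f b} hs, hle,
    Set.ncard_insert_of_notMem (by simp) (hs.subset fun b hb => hb.1), add_assoc]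
  rfl

section DownSteps

variable {m : ℕ} (x : Fin m → Bool)

def downSteps : Set ℕ := {j | isDownStep x j}

/-- The `i`-th down-step in the lexical order is the one with exactly `i` down-steps of larger
`key`. -/
def key (j : ℕ) : ℤ ×ₗ ℕ := toLex (hgt x j, j)

def below (d : ℕ) : Set ℕ := {j ∈ downSteps x | key x j < key x d}

lemma key_injective : Injective (key x) := fun i j h => by
  simpa [key] using congrArg (fun p : ℤ ×ₗ ℕ => (ofLex p).2) h

lemma key_lt_key_iff {i j : ℕ} :
    key x i < key x j ↔ hgt x i < hgt x j ∨ hgt x i = hgt x j ∧ i < j :=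
  Prod.Lex.toLex_lt_toLex

lemma downSteps_finite : (downSteps x).Finite :=
  (Set.finite_Iio (extLen x)).subset fun _ hj => hj.1

lemma mem_downSteps_of_lt {d : ℕ} (hd : d < m) : d ∈ downSteps x ↔ x ⟨d, hd⟩ = false :=
  ⟨fun h => h.2 hd, fun h => ⟨hd.trans_le (le_max_left _ _), fun _ => h⟩⟩

lemma exists_lexUp_iff {k i : ℕ} : (∃ y, lexUp m k i x y) ↔
    wt x = k ∧ ∃ d, ∃ hd : d < m, x ⟨d, hd⟩ = false ∧
      {j ∈ downSteps x | key x d < key x j}.ncard = i := by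
  have hset : ∀ d, {j | isDownStep x j ∧ (hgt x d < hgt x j ∨ (hgt x j = hgt x d ∧ d < j))} =
      {j ∈ downSteps x | key x d < key x j} := fun d => by
    ext j
    simp only [Set.mem_ofPred_eq, downSteps, key_lt_key_iff, eq_comm]
  simp only [lexUp, hset]
  constructor
  · rintro ⟨y, hk, d, hd, hds, hrank, -⟩
    exact ⟨hk, d, hd, (mem_downSteps_of_lt x hd).mp hds, hrank⟩
  · rintro ⟨hk, d, hd, hxd, hrank⟩
    exact ⟨_, hk, d, hd, (mem_downSteps_of_lt x hd).mpr hxd, hrank, rfl⟩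

end DownSteps

section MiddleLevel

variable {n : ℕ} {x : Fin (2 * n + 1) → Bool}

lemma hgt_two_mul_add_one (hx : wt x = n + 1) : hgt x (2 * n + 1) = 1 := by
  rw [hgt_of_le x le_rfl, hx]; push_cast; ring

lemma hgt_two_mul_add_two (hx : wt x = n + 1) : hgt x (2 * n + 2) = 0 := by
  rw [hgt_of_le x (by omega), hx]; push_cast; ring

lemma mem_downSteps_iff (hx : wt x = n + 1) {j : ℕ} :
    j ∈ downSteps x ↔
      (∃ hj : j < 2 * n + 1, x ⟨j, hj⟩ = false) ∨ j = 2 * n + 1 ∨ j = 2 * n + 2 := by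
  rcases lt_or_ge j (2 * n + 1) with hj | hj
  · rw [mem_downSteps_of_lt x hj]
    constructor
    · exact fun h => Or.inl ⟨hj, h⟩
    · rintro (⟨_, h⟩ | h | h)
      · exact h
      all_goals omega
  · have hext : extLen x = 2 * n + 3 := by rw [extLen, hx]; omega
    simp only [downSteps, isDownStep, hext, Set.mem_ofPred_eq]
    constructor
    · rintro ⟨hj', -⟩
      omega
    · rintro (⟨h, -⟩ | h | h) <;> exact ⟨by omega, fun h' => absurd h' (by omega)⟩

lemma ncard_downSteps (hx : wt x = n + 1) : (downSteps x).ncard = n + 2 := by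
  have hsplit : downSteps x = Fin.val '' {i | x i = false} ∪ {2 * n + 1, 2 * n + 2} := by
    ext j
    rw [mem_downSteps_iff hx]
    simp only [Set.mem_union, Set.mem_image, Set.mem_ofPred_eq, Set.mem_insert_iff,
      Set.mem_singleton_iff]
    constructor
    · rintro (⟨hj, h⟩ | h | h)
      · exact Or.inl ⟨⟨j, hj⟩, h, rfl⟩
      all_goals tauto
    · rintro (⟨i, h, rfl⟩ | h | h)
      · exact Or.inl ⟨i.isLt, h⟩
      all_goals tauto
  have hzeros : {i | x i = false}.ncard = n := by
    have hcard := Finset.card_filter_add_card_filter_not (s := Finset.univ)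
      (fun i : Fin (2 * n + 1) => x i = true)
    rw [← wt, hx, Finset.card_univ, Fintype.card_fin] at hcard
    rw [Set.ncard_eq_toFinset_card', Set.toFinset_ofPred]
    simp only [Bool.not_eq_true] at hcard
    omega
  rw [hsplit, Set.ncard_union_eq, Set.ncard_image_of_injective _ Fin.val_injective, hzeros,
    Set.ncard_pair (by omega)]
  · rw [Set.disjoint_right]
    rintro j hj ⟨i, -, rfl⟩
    have := i.isLt
    simp only [Set.mem_insert_iff, Set.mem_singleton_iff] at hj
    omega

lemma exists_lexUp_iff_ncard_below (hx : wt x = n + 1) {i : ℕ} :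
    (∃ y, lexUp (2 * n + 1) (n + 1) i x y) ↔
      ∃ d, ∃ hd : d < 2 * n + 1, x ⟨d, hd⟩ = false ∧ (below x d).ncard + i = n + 1 := by
  rw [exists_lexUp_iff, and_iff_right hx]
  refine exists_congr fun d => exists_congr fun hd => and_congr_right fun hxd => ?_
  have hrank := ncard_gt_add_ncard_lt_add_one (key_injective x) (downSteps_finite x)
    ((mem_downSteps_of_lt x hd).mpr hxd)
  rw [ncard_downSteps hx] at hrank
  change _ + (below x d).ncard + 1 = _ at hrank
  omega

lemma lowDownSteps_subset_downSteps : lowDownSteps x ⊆ downSteps x :=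
  fun _ ⟨hd, hxd, _⟩ => (mem_downSteps_of_lt x hd).mpr hxd

/-- The appended down-steps start at heights `1` and `0` to the right of `x`, so only low
down-steps come after a low one in the lexical order. -/
lemma below_subset_lowDownSteps (hx : wt x = n + 1) {d : ℕ} (hd : d ∈ lowDownSteps x) :
    below x d ⊆ lowDownSteps x := by
  obtain ⟨hdm, -, hhd⟩ := hd
  rintro j ⟨hj, hjd⟩
  rw [key_lt_key_iff] at hjd
  rcases (mem_downSteps_iff hx).mp hj with ⟨hjm, hxj⟩ | rfl | rfl
  · exact ⟨hjm, hxj, by omega⟩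
  · rw [hgt_two_mul_add_one hx] at hjd; omega
  · rw [hgt_two_mul_add_two hx] at hjd; omega

lemma lowDownSteps_subset_below {d : ℕ} (hd : 0 < hgt x d) : lowDownSteps x ⊆ below x d := by
  rintro j ⟨hjm, hxj, hhj⟩
  exact ⟨(mem_downSteps_of_lt x hjm).mpr hxj, (key_lt_key_iff x).mpr (Or.inl (by omega))⟩

lemma two_mul_add_two_mem_below (hx : wt x = n + 1) {d : ℕ} (hd : 0 < hgt x d) :
    2 * n + 2 ∈ below x d :=
  ⟨(mem_downSteps_iff hx).mpr (by omega),
    (key_lt_key_iff x).mpr (Or.inl (by rw [hgt_two_mul_add_two hx]; exact hd))⟩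

lemma two_mul_add_one_mem_below (hx : wt x = n + 1) {d : ℕ} (hd : 1 < hgt x d) :
    2 * n + 1 ∈ below x d :=
  ⟨(mem_downSteps_iff hx).mpr (by omega),
    (key_lt_key_iff x).mpr (Or.inl (by rw [hgt_two_mul_add_one hx]; exact hd))⟩

lemma exists_below_eq_empty_iff (hx : wt x = n + 1) :
    (∃ d, ∃ hd : d < 2 * n + 1, x ⟨d, hd⟩ = false ∧ below x d = ∅) ↔
      (lowDownSteps x).Nonempty := by
  constructor
  · rintro ⟨d, hd, hxd, hbelow⟩
    by_contra hlow
    have hhd : 0 < hgt x d := by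
      by_contra h
      exact hlow ⟨d, hd, hxd, by omega⟩
    simpa [hbelow] using two_mul_add_two_mem_below hx hhd
  · intro hlow
    obtain ⟨d, hd, hmin⟩ := Set.exists_min_image _ (key x) (lowDownSteps_finite x) hlow
    refine ⟨d, hd.1, hd.2.1, Set.eq_empty_of_forall_notMem fun j hj => ?_⟩
    exact (hmin j (below_subset_lowDownSteps hx hd hj)).not_gt hj.2

lemma exists_below_eq_singleton_of_one_lt_ncard (hx : wt x = n + 1)
    (hlow : 1 < (lowDownSteps x).ncard) : ∃ d ∈ lowDownSteps x, ∃ a, below x d = {a} := by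
  have hfin := lowDownSteps_finite x
  obtain ⟨a, ha, hamin⟩ := Set.exists_min_image _ (key x) hfin
    (Set.nonempty_of_ncard_ne_zero (by omega))
  obtain ⟨d, ⟨hd, hda⟩, hdmin⟩ := Set.exists_min_image _ (key x) hfin.sdiff
    (Set.nonempty_of_ncard_ne_zero (by rw [Set.ncard_sdiff_singleton_of_mem ha]; omega) :
      (lowDownSteps x \ {a}).Nonempty)
  refine ⟨d, hd, a, Set.eq_singleton_iff_unique_mem.mpr ⟨?_, fun j hj => ?_⟩⟩
  · refine ⟨lowDownSteps_subset_downSteps ha, lt_of_le_of_ne (hamin d hd) fun h => hda ?_⟩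
    exact key_injective x h.symm
  · by_contra hja
    exact (hdmin j ⟨below_subset_lowDownSteps hx hd hj, hja⟩).not_gt hj.2

lemma exists_below_eq_singleton_of_lowDownSteps_eq_empty (hx : wt x = n + 1)
    (hlow : lowDownSteps x = ∅)
    (hone : ∃ d, ∃ hd : d < 2 * n + 1, x ⟨d, hd⟩ = false ∧ hgt x d = 1) :
    ∃ d, ∃ hd : d < 2 * n + 1, x ⟨d, hd⟩ = false ∧ below x d = {2 * n + 2} := by
  obtain ⟨d, ⟨hd, hxd, hhd⟩, hleftmost⟩ :=
    Set.exists_min_image {d | ∃ hd : d < 2 * n + 1, x ⟨d, hd⟩ = false ∧ hgt x d = 1} id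
    ((Set.finite_Iio (2 * n + 1)).subset fun _ ⟨hd, _⟩ => hd) hone
  refine ⟨d, hd, hxd, Set.eq_singleton_iff_unique_mem.mpr
    ⟨two_mul_add_two_mem_below hx (by omega), fun j ⟨hj, hjd⟩ => ?_⟩⟩
  rw [key_lt_key_iff, hhd] at hjd
  rcases (mem_downSteps_iff hx).mp hj with ⟨hjm, hxj⟩ | rfl | rfl
  · have hhj : 0 < hgt x j := by
      by_contra h
      exact (Set.eq_empty_iff_forall_notMem.mp hlow) j ⟨hjm, hxj, by omega⟩
    have := hleftmost j ⟨hjm, hxj, by omega⟩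
    simp only [id] at this
    omega
  · rw [hgt_two_mul_add_one hx] at hjd; omega
  · rfl

lemma exists_ncard_below_eq_one_iff (hx : wt x = n + 1) :
    (∃ d, ∃ hd : d < 2 * n + 1, x ⟨d, hd⟩ = false ∧ (below x d).ncard = 1) ↔
      1 < (lowDownSteps x).ncard ∨
        (lowDownSteps x = ∅ ∧ ∃ d, ∃ hd : d < 2 * n + 1, x ⟨d, hd⟩ = false ∧ hgt x d = 1) := by
  constructor
  · rintro ⟨d, hd, hxd, hbelow⟩
    obtain ⟨a, ha⟩ := Set.ncard_eq_one.mp hbelow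
    by_cases hhd : hgt x d ≤ 0
    · have hdlow : d ∈ lowDownSteps x := ⟨hd, hxd, hhd⟩
      have hab : a ∈ below x d := ha ▸ rfl
      refine Or.inl ((Set.one_lt_ncard_iff (lowDownSteps_finite x)).mpr
        ⟨a, d, below_subset_lowDownSteps hx hdlow hab, hdlow, ?_⟩)
      rintro rfl
      exact lt_irrefl _ hab.2
    · have hmem : ∀ j ∈ below x d, j = a := fun j hj => by rwa [ha] at hj
      have h22 := hmem _ (two_mul_add_two_mem_below hx (by omega))
      refine Or.inr ⟨Set.eq_empty_of_forall_notMem fun j hj => ?_, d, hd, hxd, ?_⟩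
      · have := hmem j (lowDownSteps_subset_below (by omega) hj)
        obtain ⟨hjm, -⟩ := hj
        omega
      · by_contra h
        have := hmem _ (two_mul_add_one_mem_below hx (by omega))
        omega
  · rintro (hlow | ⟨hlow, hone⟩)
    · obtain ⟨d, ⟨hd, hxd, -⟩, a, ha⟩ := exists_below_eq_singleton_of_one_lt_ncard hx hlow
      exact ⟨d, hd, hxd, by rw [ha, Set.ncard_singleton]⟩
    · obtain ⟨d, hd, hxd, hbelow⟩ :=
        exists_below_eq_singleton_of_lowDownSteps_eq_empty hx hlow hone
      exact ⟨d, hd, hxd, by rw [hbelow, Set.ncard_singleton]⟩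

lemma exists_lexUp_last_iff (hx : wt x = n + 1) :
    (∃ y, lexUp (2 * n + 1) (n + 1) (n + 1) x y) ↔ (negPrefixes x).Nonempty := by
  rw [← lowDownSteps_nonempty_iff, ← exists_below_eq_empty_iff hx,
    exists_lexUp_iff_ncard_below hx]
  refine exists_congr fun d => exists_congr fun hd => and_congr_right fun _ => ?_
  rw [← Set.ncard_eq_zero ((downSteps_finite x).subset fun _ hj => hj.1)]
  omega

lemma exists_lexUp_second_last_iff (hx : wt x = n + 1) :
    (∃ y, lexUp (2 * n + 1) (n + 1) n x y) ↔
      1 < (negPrefixes x).ncard ∨ (negPrefixes x = ∅ ∧ ReturnsToZero x) := by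
  have hempty : lowDownSteps x = ∅ ↔ negPrefixes x = ∅ := by
    simpa only [Set.not_nonempty_iff_eq_empty] using (lowDownSteps_nonempty_iff x).not
  rw [← one_lt_ncard_lowDownSteps_iff, exists_lexUp_iff_ncard_below hx]
  have hrank : (∃ d, ∃ hd : d < 2 * n + 1, x ⟨d, hd⟩ = false ∧ (below x d).ncard + n = n + 1) ↔
      ∃ d, ∃ hd : d < 2 * n + 1, x ⟨d, hd⟩ = false ∧ (below x d).ncard = 1 :=
    exists_congr fun d => exists_congr fun hd => and_congr_right fun _ => by omega
  rw [hrank, exists_ncard_below_eq_one_iff hx]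
  refine or_congr_right ⟨fun ⟨hlow, hone⟩ => ?_, fun ⟨hneg, hret⟩ => ?_⟩
  · have hneg := hempty.mp hlow
    exact ⟨hneg, (exists_down_step_from_one_iff x hneg).mp hone⟩
  · exact ⟨hempty.mpr hneg, (exists_down_step_from_one_iff x hneg).mpr hret⟩

end MiddleLevel

end LexicalMatching

open LexicalMatching in
theorem first_last_isolated_vertices_general (n : ℕ)
    (x : Fin (2 * n + 1) → Bool) (hx : wt x = n + 1) :
    (((∃ y, lexUp (2 * n + 1) (n + 1) n x y) ∧
        ¬ (∃ y, lexUp (2 * n + 1) (n + 1) (n + 1) x y)) ↔ inDeq0 (2 * n + 1) (n + 1) x) ∧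
    (((∃ y, lexUp (2 * n + 1) (n + 1) (n + 1) x y) ∧
        ¬ (∃ y, lexUp (2 * n + 1) (n + 1) n x y)) ↔ inDminus (2 * n + 1) (n + 1) x) ∧
    ((¬ (∃ y, lexUp (2 * n + 1) (n + 1) n x y) ∧
        ¬ (∃ y, lexUp (2 * n + 1) (n + 1) (n + 1) x y)) ↔ inDgt0 (2 * n + 1) (n + 1) x) := by
  rw [exists_lexUp_last_iff hx, exists_lexUp_second_last_iff hx, inDeq0_iff, inDminus_iff,
    inDgt0_iff, ← Set.ncard_pos (negPrefixes_finite x),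
    ← Set.ncard_eq_zero (negPrefixes_finite x)]
  simp only [hx, true_and]
  rcases Nat.lt_trichotomy (negPrefixes x).ncard 1 with hk | hk | hk
  · simp [Nat.lt_one_iff.mp hk]
  · simp [hk]
  · simp [hk, hk.ne', (zero_lt_one.trans hk).ne']

/-- For the two lexical matchings `M^n_{2n+1,n+1}` and `M^{n+1}_{2n+1,n+1}` between levels
`n+1` and `n+2` of the `(2n+1)`-cube and a vertex `x` of level `n+1`: `x` is matched by the
first and unmatched by the second iff `x ∈ D^{=0}_{2n+1,n+1}`; matched by the second and
unmatched by the first iff `x ∈ D^-_{2n+1,n+1}`; unmatched by both iff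
`x ∈ D^{>0}_{2n+1,n+1}`. -/
theorem first_last_isolated_vertices (n : ℕ) (hn : 1 ≤ n)
    (x : Fin (2 * n + 1) → Bool) (hx : wt x = n + 1) :
    (((∃ y, lexUp (2 * n + 1) (n + 1) n x y) ∧
        ¬ (∃ y, lexUp (2 * n + 1) (n + 1) (n + 1) x y)) ↔ inDeq0 (2 * n + 1) (n + 1) x) ∧
    (((∃ y, lexUp (2 * n + 1) (n + 1) (n + 1) x y) ∧
        ¬ (∃ y, lexUp (2 * n + 1) (n + 1) n x y)) ↔ inDminus (2 * n + 1) (n + 1) x) ∧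
    ((¬ (∃ y, lexUp (2 * n + 1) (n + 1) n x y) ∧
        ¬ (∃ y, lexUp (2 * n + 1) (n + 1) (n + 1) x y)) ↔ inDgt0 (2 * n + 1) (n + 1) x) :=
  first_last_isolated_vertices_general n x hx
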